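/- arXiv:1801.07087 — 2 statements merged into one kernel-verified Lean document; each statement's English description precedes it below -/
import Mathlib

section
/- If a bounded sequence (z_k) in ℝ^N has the property that ‖z_k − z⋆‖ converges for every z⋆ in a set S with nonempty interior, then (z_k) has at most one accumulation point, hence converges. -/
/-
If `a` and `b` are accumulation points of `z`, then for every `w ∈ S` both
`‖a - w‖` and `‖b - w‖` equal `lim ‖z k - w‖`. Expanding the squares, `⟪a - b, w⟫` is then
constant on the interior of `S`; moving `w` inside that open set in the direction `a - b`
changes this inner product by a nonzero multiple of `‖a - b‖²` unless `a = b`. A bounded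
sequence in `ℝ^N` with a unique accumulation point converges.
-/

open Filter Topology Bornology

theorem MapClusterPt.apply_eq_of_tendsto_comp {X Y ι : Type*} [TopologicalSpace X]
    [TopologicalSpace Y] [T2Space Y] {l : Filter ι} {u : ι → X} {x : X} {f : X → Y} {y : Y}
    (hx : MapClusterPt x l u) (hf : ContinuousAt f x) (hfu : Tendsto (f ∘ u) l (𝓝 y)) :
    f x = y :=
  eq_of_nhds_neBot ((hx.continuousAt_comp hf).neBot.mono (inf_le_inf_left _ hfu))

theorem exists_tendsto_of_isBounded_range_of_mapClusterPt_unique {X ι : Type*}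
    [PseudoMetricSpace X] [ProperSpace X] {l : Filter ι} [l.NeBot] {u : ι → X}
    (hu : IsBounded (Set.range u))
    (huniq : ∀ a b, MapClusterPt a l u → MapClusterPt b l u → a = b) :
    ∃ a, Tendsto u l (𝓝 a) := by
  have hmem : ∀ i, u i ∈ closure (Set.range u) := fun i => subset_closure (Set.mem_range_self i)
  obtain ⟨a, -, ha⟩ := hu.isCompact_closure.exists_mapClusterPt (f := l) (u := u)
    (tendsto_principal.2 (Eventually.of_forall hmem))
  exact ⟨a, hu.isCompact_closure.tendsto_nhds_of_unique_mapClusterPt (Eventually.of_forall hmem)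
    fun b _ hb => huniq b a hb ha⟩

section InnerProductSpace

variable {E : Type*} [NormedAddCommGroup E] [InnerProductSpace ℝ E]

theorem eq_zero_of_forall_inner_eq_of_isOpen {U : Set E} (hU : IsOpen U) (hne : U.Nonempty)
    {v : E} {c : ℝ} (h : ∀ w ∈ U, inner ℝ v w = c) : v = 0 := by
  obtain ⟨w, hw⟩ := hne
  have hline : Tendsto (fun t : ℝ => w + t • v) (𝓝[≠] 0) (𝓝 w) := by
    have : Continuous fun t : ℝ => w + t • v := by fun_prop
    simpa using (this.tendsto 0).mono_left nhdsWithin_le_nhds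
  obtain ⟨t, htU, ht⟩ :=
    ((hline.eventually (hU.mem_nhds hw)).and self_mem_nhdsWithin).exists
  have hvv : t * inner ℝ v v = 0 := by
    have := h _ htU
    rw [inner_add_right, real_inner_smul_right, h w hw] at this
    linarith
  exact inner_self_eq_zero.1 ((mul_eq_zero.1 hvv).resolve_left ht)

theorem eq_of_forall_norm_sub_eq_of_isOpen {U : Set E} (hU : IsOpen U) (hne : U.Nonempty)
    {a b : E} (h : ∀ w ∈ U, ‖a - w‖ = ‖b - w‖) : a = b := by
  refine sub_eq_zero.1 (eq_zero_of_forall_inner_eq_of_isOpen hU hne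
    (c := (‖a‖ ^ 2 - ‖b‖ ^ 2) / 2) fun w hw => ?_)
  have hsq : ‖a - w‖ ^ 2 = ‖b - w‖ ^ 2 := by rw [h w hw]
  rw [norm_sub_sq_real, norm_sub_sq_real] at hsq
  rw [inner_sub_left]
  linarith

end InnerProductSpace

/-- If a bounded sequence (z_k) in ℝ^N has the property that
‖z_k − z⋆‖ converges for every z⋆ in a set S with nonempty interior, then (z_k)
has at most one accumulation point, hence converges. -/
theorem stmt_14 (N : ℕ) (z : ℕ → EuclideanSpace ℝ (Fin N))
    (hbdd : Bornology.IsBounded (Set.range z))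
    (S : Set (EuclideanSpace ℝ (Fin N))) (hS : (interior S).Nonempty)
    (hconv : ∀ zs ∈ S, ∃ d : ℝ, Tendsto (fun k => ‖z k - zs‖) atTop (nhds d)) :
    ∃ zhat : EuclideanSpace ℝ (Fin N), Tendsto z atTop (nhds zhat) := by
  refine exists_tendsto_of_isBounded_range_of_mapClusterPt_unique hbdd fun a b ha hb => ?_
  refine eq_of_forall_norm_sub_eq_of_isOpen isOpen_interior hS fun w hw => ?_
  obtain ⟨d, hd⟩ := hconv w (interior_subset hw)
  have hcont : Continuous fun x : EuclideanSpace ℝ (Fin N) => ‖x - w‖ := by fun_prop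
  exact (ha.apply_eq_of_tendsto_comp hcont.continuousAt hd).trans
    (hb.apply_eq_of_tendsto_comp hcont.continuousAt hd).symm
end

section
/- Let C ⊆ ℝ^M be closed convex with K-metric projection P_C, and suppose for each k ∈ ℕ, w_{k+1} = w_k − μ_k (w_k − P_{C_k}(w_k)) with μ_k ∈ [ε₁, 2−ε₂] (ε₁,ε₂ > 0), where each C_k is closed convex and ∩_k C_k ⊇ {w⋆} is nonempty. Then Σ_k μ_k(2−μ_k) ‖w_k − P_{C_k}(w_k)‖_K² ≤ ‖w_0 − w⋆‖_K², and consequently ‖w_k − P_{C_k}(w_k)‖_K → 0. -/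
open Filter RealInnerProductSpace

/-!
Since `w⋆` lies in every `C_k`, the variational inequality of the projection gives the Fejér
estimate `‖w_{k+1} − w⋆‖² ≤ ‖w_k − w⋆‖² − μ_k(2 − μ_k)‖w_k − P_{C_k}(w_k)‖²`, which telescopes
to the bound on the partial sums. The terms of the resulting convergent series dominate
`ε₁ε₂‖w_k − P_{C_k}(w_k)‖²`, so the residuals tend to zero.
-/

section Projection

variable {F : Type*} [NormedAddCommGroup F] [InnerProductSpace ℝ F]

theorem real_inner_sub_le_zero_of_forall_norm_sub_le {s : Set F} (hs : Convex ℝ s)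
    {x p y : F} (hp : p ∈ s) (hmin : ∀ v ∈ s, ‖x - p‖ ≤ ‖x - v‖) (hy : y ∈ s) :
    ⟪x - p, y - p⟫ ≤ 0 := by
  have : Nonempty s := ⟨⟨p, hp⟩⟩
  have hbdd : BddBelow (Set.range fun v : s => ‖x - v‖) :=
    ⟨0, by rintro _ ⟨v, rfl⟩; exact norm_nonneg _⟩
  have hinf : ‖x - p‖ = ⨅ v : s, ‖x - v‖ :=
    le_antisymm (le_ciInf fun v => hmin v v.2) (ciInf_le hbdd ⟨p, hp⟩)
  exact (norm_eq_iInf_iff_real_inner_le_zero hs hp).1 hinf y hy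

theorem norm_sub_relaxed_step_sq_le {x p y : F} {μ : ℝ} (hμ : 0 ≤ μ)
    (hsep : ⟪x - p, y - p⟫ ≤ 0) :
    ‖x - μ • (x - p) - y‖ ^ 2 ≤ ‖x - y‖ ^ 2 - μ * (2 - μ) * ‖x - p‖ ^ 2 := by
  have hstep : x - μ • (x - p) - y = (x - y) - μ • (x - p) := by module
  have hinner : ⟪x - p, x - y⟫ = ‖x - p‖ ^ 2 - ⟪x - p, y - p⟫ := by
    rw [show x - y = (x - p) - (y - p) by abel, inner_sub_right, real_inner_self_eq_norm_sq]
  rw [hstep, norm_sub_sq_real, real_inner_smul_right, norm_smul, mul_pow, Real.norm_eq_abs,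
    sq_abs, real_inner_comm, hinner]
  nlinarith [mul_nonneg hμ (neg_nonneg.2 hsep)]

end Projection

theorem sum_range_le_of_le_sub_succ {a b : ℕ → ℝ} (hab : ∀ k, a k ≤ b k - b (k + 1))
    (hb : ∀ k, 0 ≤ b k) (n : ℕ) : ∑ k ∈ Finset.range n, a k ≤ b 0 :=
  calc ∑ k ∈ Finset.range n, a k
      ≤ ∑ k ∈ Finset.range n, (b k - b (k + 1)) := Finset.sum_le_sum fun k _ => hab k
    _ = b 0 - b n := Finset.sum_range_sub' b n
    _ ≤ b 0 := sub_le_self _ (hb n)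

theorem mul_le_mul_two_sub {ε₁ ε₂ μ : ℝ} (hε₁ : 0 ≤ ε₁) (hε₂ : 0 ≤ ε₂) (h₁ : ε₁ ≤ μ)
    (h₂ : μ ≤ 2 - ε₂) : ε₁ * ε₂ ≤ μ * (2 - μ) := by
  nlinarith [mul_nonneg (sub_nonneg.2 h₁) (sub_nonneg.2 h₂), mul_nonneg hε₂ (sub_nonneg.2 h₁),
    mul_nonneg hε₁ (sub_nonneg.2 h₂)]

theorem tendsto_norm_zero_of_summable_of_le {E : Type*} [SeminormedAddCommGroup E]
    {d : ℕ → E} {a : ℕ → ℝ} {c : ℝ} (hc : 0 < c) (ha : Summable a)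
    (hle : ∀ k, c * ‖d k‖ ^ 2 ≤ a k) : Tendsto (fun k => ‖d k‖) atTop (nhds 0) := by
  have hsq : Summable fun k => ‖d k‖ ^ 2 :=
    (ha.div_const c).of_nonneg_of_le (fun k => sq_nonneg _)
      fun k => (le_div_iff₀' hc).2 (hle k)
  simpa [Real.sqrt_sq (norm_nonneg _)] using hsq.tendsto_atTop_zero.sqrt

theorem stmt_19_general (E : Type*) [NormedAddCommGroup E] [InnerProductSpace ℝ E]
    (C : ℕ → Set E) (hCcv : ∀ k, Convex ℝ (C k))
    (wstar : E) (hws : ∀ k, wstar ∈ C k)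
    (ε₁ ε₂ : ℝ) (hε₁ : 0 < ε₁) (hε₂ : 0 < ε₂)
    (μ : ℕ → ℝ) (hμ : ∀ k, ε₁ ≤ μ k ∧ μ k ≤ 2 - ε₂)
    (w p : ℕ → E)
    (hp : ∀ k, p k ∈ C k ∧ ∀ v ∈ C k, ‖w k - p k‖ ≤ ‖w k - v‖)
    (hrec : ∀ k, w (k + 1) = w k - μ k • (w k - p k)) :
    (∀ n : ℕ, ∑ k ∈ Finset.range n, μ k * (2 - μ k) * ‖w k - p k‖ ^ 2 ≤
        ‖w 0 - wstar‖ ^ 2) ∧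
    Tendsto (fun k => ‖w k - p k‖) atTop (nhds 0) := by
  have hfejer (k : ℕ) : μ k * (2 - μ k) * ‖w k - p k‖ ^ 2 ≤
      ‖w k - wstar‖ ^ 2 - ‖w (k + 1) - wstar‖ ^ 2 := by
    have hsep := real_inner_sub_le_zero_of_forall_norm_sub_le (hCcv k) (hp k).1 (hp k).2 (hws k)
    have := norm_sub_relaxed_step_sq_le (hε₁.le.trans (hμ k).1) hsep
    rw [hrec k]
    linarith
  have hsum := sum_range_le_of_le_sub_succ hfejer (fun k => sq_nonneg _)
  refine ⟨hsum, ?_⟩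
  have hgap (k : ℕ) : ε₁ * ε₂ ≤ μ k * (2 - μ k) :=
    mul_le_mul_two_sub hε₁.le hε₂.le (hμ k).1 (hμ k).2
  have hnonneg (k : ℕ) : 0 ≤ μ k * (2 - μ k) * ‖w k - p k‖ ^ 2 :=
    mul_nonneg ((mul_pos hε₁ hε₂).le.trans (hgap k)) (sq_nonneg _)
  exact tendsto_norm_zero_of_summable_of_le (mul_pos hε₁ hε₂)
    (summable_of_sum_range_le hnonneg hsum)
    fun k => mul_le_mul_of_nonneg_right (hgap k) (sq_nonneg _)

/-- Let (C_k) be closed convex sets in a real inner product space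
(e.g. ℝ^M with the K-metric) with common point w⋆ ∈ ∩_k C_k, and suppose
w_{k+1} = w_k − μ_k (w_k − P_{C_k}(w_k)) with μ_k ∈ [ε₁, 2−ε₂], ε₁, ε₂ > 0,
where p k = P_{C_k}(w_k) is the metric projection. Then
Σ_{k<n} μ_k(2−μ_k)‖w_k − P_{C_k}(w_k)‖² ≤ ‖w_0 − w⋆‖² for every n, and
consequently ‖w_k − P_{C_k}(w_k)‖ → 0. -/
theorem stmt_19 (E : Type*) [NormedAddCommGroup E] [InnerProductSpace ℝ E]
    [FiniteDimensional ℝ E]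
    (C : ℕ → Set E) (hCcl : ∀ k, IsClosed (C k)) (hCcv : ∀ k, Convex ℝ (C k))
    (wstar : E) (hws : ∀ k, wstar ∈ C k)
    (ε₁ ε₂ : ℝ) (hε₁ : 0 < ε₁) (hε₂ : 0 < ε₂)
    (μ : ℕ → ℝ) (hμ : ∀ k, ε₁ ≤ μ k ∧ μ k ≤ 2 - ε₂)
    (w p : ℕ → E)
    (hp : ∀ k, p k ∈ C k ∧ ∀ v ∈ C k, ‖w k - p k‖ ≤ ‖w k - v‖)
    (hrec : ∀ k, w (k + 1) = w k - μ k • (w k - p k)) :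
    (∀ n : ℕ, ∑ k ∈ Finset.range n, μ k * (2 - μ k) * ‖w k - p k‖ ^ 2 ≤
        ‖w 0 - wstar‖ ^ 2) ∧
    Tendsto (fun k => ‖w k - p k‖) atTop (nhds 0) :=
  stmt_19_general E C hCcv wstar hws ε₁ ε₂ hε₁ hε₂ μ hμ w p hp hrec
end
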